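/- Let N be a connected minor of a connected finite matroid M and let e be an element of E(M) − E(N). Then M∖e or M/e is connected and has N as a minor. -/

import Mathlib

/-!
By duality (`(M ／ e)✶ = M✶ ＼ e`) we may assume that `N` is a minor of `M ＼ e`, and that
`M ＼ e` has a proper separator `X`. Separators of a matroid cut separators out of its minors,
so the connected `N` avoids one side `S` of the separation, and is then a minor of
`M ＼ e ＼ S`. As `M` is connected, `e` is a coloop of `M ＼ S`, so `M ＼ e ＼ S = M ／ e ＼ S`
and `N` is a minor of `M ／ e`. Finally `M ／ e` is connected: for separations `(X, Y)` of
`M ＼ e` and `(A, B)` of `M ／ e`, submodularity of the rank gives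
`λ(X ∩ A) + λ(Y ∩ B) ≤ 1` for the connectivity function `λ` of `M`, and likewise with `A` and
`B` exchanged, so connectivity of `M` forces one of `X, Y, A, B` to be empty.
-/

noncomputable section
open scoped Matroid

namespace Matroid

variable {α : Type*}

/-- The rank of a set `X` in a (finite) matroid `M`: the largest size of an independent
subset of `X`. -/
def rankOf (M : Matroid α) (X : Set α) : ℕ :=
  sSup {n | ∃ I, M.Indep I ∧ I ⊆ X ∧ I.ncard = n}

/-- `X` is a separator of `M`: `X ⊆ E` and `r(X) + r(E − X) = r(E)`. -/
def IsSep (M : Matroid α) (X : Set α) : Prop :=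
  X ⊆ M.E ∧ M.rankOf X + M.rankOf (M.E \ X) = M.rankOf M.E

/-- `M` is connected: it has no proper separator. -/
def IsConn (M : Matroid α) : Prop :=
  ¬ ∃ X, M.IsSep X ∧ X.Nonempty ∧ X ≠ M.E

/-- The matroid `M∖e` obtained by deleting the element `e`. -/
def delElem (M : Matroid α) (e : α) : Matroid α := M ↾ (M.E \ {e})

/-- The matroid `M/e` obtained by contracting the element `e`, via `M/e = (M✶∖e)✶`. -/
def conElem (M : Matroid α) (e : α) : Matroid α := ((M✶) ↾ (M.E \ {e}))✶

/-- `N` is a minor of `M`: it is obtained from `M` by a sequence of single-element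
deletions and contractions. -/
inductive MinorOfElem : Matroid α → Matroid α → Prop
  | refl (M : Matroid α) : MinorOfElem M M
  | del {N M : Matroid α} (e : α) : MinorOfElem N M → e ∈ N.E → MinorOfElem (N.delElem e) M
  | con {N M : Matroid α} (e : α) : MinorOfElem N M → e ∈ N.E → MinorOfElem (N.conElem e) M

end Matroid

namespace Matroid

open Set

variable {α : Type*} {M N : Matroid α} {S X Y Z C D : Set α} {e : α}

section Rank

lemma cast_rankOf (M : Matroid α) [M.RankFinite] (X : Set α) :
    (M.rankOf X : ℕ∞) = M.eRk X := by
  obtain ⟨I, hI⟩ := M.exists_isBasis' X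
  have hIfin : I.Finite := hI.indep.finite
  suffices h : M.rankOf X = I.ncard by
    rw [h, hIfin.cast_ncard_eq, hI.encard_eq_eRk]
  refine IsGreatest.csSup_eq ⟨⟨I, hI.indep, hI.subset, rfl⟩, ?_⟩
  rintro _ ⟨J, hJ, hJX, rfl⟩
  have hJI : J.encard ≤ I.encard := hI.encard_eq_eRk ▸ hJ.encard_le_eRk_of_subset hJX
  rwa [← hJ.finite.cast_ncard_eq, ← hIfin.cast_ncard_eq, Nat.cast_le] at hJI

section RankFinite

variable [M.RankFinite]

lemma rankOf_mono (hXY : X ⊆ Y) : M.rankOf X ≤ M.rankOf Y := by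
  exact_mod_cast (M.cast_rankOf X).trans_le ((M.eRk_mono hXY).trans (M.cast_rankOf Y).ge)

lemma rankOf_union_le (X Y : Set α) : M.rankOf (X ∪ Y) ≤ M.rankOf X + M.rankOf Y := by
  have h := M.eRk_union_le_eRk_add_eRk X Y
  rw [← cast_rankOf, ← cast_rankOf, ← cast_rankOf] at h
  exact_mod_cast h

lemma rankOf_inter_add_rankOf_union_le (X Y : Set α) :
    M.rankOf (X ∩ Y) + M.rankOf (X ∪ Y) ≤ M.rankOf X + M.rankOf Y := by
  have h := M.eRk_inter_add_eRk_union_le X Y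
  rw [← cast_rankOf, ← cast_rankOf, ← cast_rankOf, ← cast_rankOf] at h
  exact_mod_cast h

lemma rankOf_singleton_le (e : α) : M.rankOf {e} ≤ 1 := by
  have h := M.eRk_singleton_le e
  rw [← cast_rankOf] at h
  exact_mod_cast h

lemma rankOf_empty : M.rankOf ∅ = 0 := by
  exact_mod_cast (M.cast_rankOf ∅).trans M.eRk_empty

lemma rankOf_inter_ground (X : Set α) : M.rankOf (X ∩ M.E) = M.rankOf X := by
  exact_mod_cast (M.cast_rankOf _).trans ((M.eRk_inter_ground X).trans (M.cast_rankOf X).symm)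

lemma rankOf_delete (D X : Set α) : (M ＼ D).rankOf X = M.rankOf (X \ D) := by
  have h := M.restrict_eRk_eq' (M.E \ D) X
  rw [← delete_eq_restrict, ← cast_rankOf, ← cast_rankOf, Nat.cast_inj] at h
  rw [h, ← rankOf_inter_ground (X \ D)]
  congr 1
  tauto_set

lemma ext_rankOf {M₁ M₂ : Matroid α} [M₁.RankFinite] [M₂.RankFinite] (hE : M₁.E = M₂.E)
    (h : ∀ X ⊆ M₁.E, M₁.rankOf X = M₂.rankOf X) : M₁ = M₂ := by
  refine ext_indep hE fun I hI => ?_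
  rw [indep_iff_eRk_eq_encard, indep_iff_eRk_eq_encard, ← cast_rankOf, ← cast_rankOf, h I hI]

end RankFinite

variable [M.Finite]

lemma rankOf_dual_add (hX : X ⊆ M.E) :
    M✶.rankOf X + M.rankOf M.E = M.rankOf (M.E \ X) + X.ncard := by
  have h := M.eRk_dual_add_eRank X hX
  rw [← eRk_ground, ← cast_rankOf, ← cast_rankOf, ← cast_rankOf,
    ← (M.ground_finite.subset hX).cast_ncard_eq] at h
  exact_mod_cast h

lemma rankOf_contract_add (hC : C ⊆ M.E) (hX : X ⊆ M.E \ C) :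
    (M ／ C).rankOf X + M.rankOf C = M.rankOf (X ∪ C) := by
  have hCX : C ∪ X ⊆ M.E := union_subset hC (hX.trans sdiff_subset)
  have h₁ := (M✶ ＼ C).rankOf_dual_add (X := X) hX
  have h₂ := M.rankOf_dual_add (X := M.E \ C) sdiff_subset
  have h₃ := M.rankOf_dual_add (X := M.E \ (C ∪ X)) sdiff_subset
  have h₄ := ncard_sdiff_add_ncard_of_subset hX M.ground_finite.sdiff
  rw [delete_ground, dual_ground, rankOf_delete, rankOf_delete, sdiff_idem,
    show ((M.E \ C) \ X) \ C = M.E \ (C ∪ X) by tauto_set] at h₁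
  rw [sdiff_sdiff_cancel_left hC] at h₂
  rw [sdiff_sdiff_cancel_left hCX] at h₃
  rw [sdiff_sdiff] at h₄
  rw [← dual_delete_dual, union_comm]
  omega

end Rank

section Separator

lemma IsSep.compl (hS : M.IsSep S) : M.IsSep (M.E \ S) :=
  ⟨sdiff_subset, by rw [sdiff_sdiff_cancel_left hS.1, add_comm]; exact hS.2⟩

section RankFinite

variable [M.RankFinite]

lemma IsSep.rankOf_eq_add (hS : M.IsSep S) (hZ : Z ⊆ M.E) :
    M.rankOf Z = M.rankOf (Z ∩ S) + M.rankOf (Z \ S) := by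
  refine le_antisymm ?_ ?_
  · simpa only [inter_union_sdiff] using M.rankOf_union_le (Z ∩ S) (Z \ S)
  have h₁ := M.rankOf_inter_add_rankOf_union_le Z S
  have h₂ := M.rankOf_inter_add_rankOf_union_le (Z ∪ S) (M.E \ S)
  rw [show (Z ∪ S) ∩ (M.E \ S) = Z \ S by tauto_set,
    show Z ∪ S ∪ M.E \ S = M.E by have := hS.1; tauto_set] at h₂
  have := hS.2
  omega

lemma IsSep.delete (hS : M.IsSep S) (D : Set α) : (M ＼ D).IsSep (S \ D) := by
  refine ⟨sdiff_subset_sdiff_left hS.1, ?_⟩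
  have h := hS.rankOf_eq_add (Z := M.E \ D) sdiff_subset
  rw [delete_ground, rankOf_delete, rankOf_delete, rankOf_delete, sdiff_idem, sdiff_idem]
  rw [show (M.E \ D) ∩ S = S \ D by have := hS.1; tauto_set] at h
  rw [show ((M.E \ D) \ (S \ D)) \ D = (M.E \ D) \ S by tauto_set]
  exact h.symm

end RankFinite

variable [M.Finite]

lemma isSep_dual_iff : M✶.IsSep S ↔ M.IsSep S := by
  simp only [IsSep, dual_ground]
  refine and_congr_right fun hS => ?_
  have h₁ := M.rankOf_dual_add hS
  have h₂ := M.rankOf_dual_add (X := M.E \ S) sdiff_subset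
  have h₃ := M.rankOf_dual_add (X := M.E) subset_rfl
  have h₄ := ncard_sdiff_add_ncard_of_subset hS M.ground_finite
  rw [sdiff_sdiff_cancel_left hS] at h₂
  rw [sdiff_self, rankOf_empty] at h₃
  omega

lemma IsSep.contract (hS : M.IsSep S) (C : Set α) : (M ／ C).IsSep (S \ C) :=
  isSep_dual_iff.1 (by rw [dual_contract]; exact (isSep_dual_iff.2 hS).delete C)

lemma IsSep.inter_ground_of_isMinor (hS : M.IsSep S) (hNM : N ≤m M) : N.IsSep (S ∩ N.E) := by
  obtain ⟨C, D, -, -, -, rfl⟩ := hNM.exists_eq_contract_delete_disjoint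
  convert (hS.contract C).delete D using 1
  have := hS.1
  simp only [delete_ground, contract_ground]
  tauto_set

lemma IsSep.contract_delete_eq (hS : M.IsSep S) (hCS : C ⊆ S) : M ／ C ＼ S = M ＼ S := by
  have hSE := hS.1
  refine ext_rankOf (by simp only [delete_ground, contract_ground]; tauto_set) fun Z hZ => ?_
  simp only [delete_ground, contract_ground] at hZ
  have hZS : Z \ S = Z := by tauto_set
  have hcon := rankOf_contract_add (hCS.trans hSE) (hZ.trans sdiff_subset)
  have hsplit := hS.rankOf_eq_add (Z := Z ∪ C) (by tauto_set)
  rw [show (Z ∪ C) ∩ S = C by tauto_set, show (Z ∪ C) \ S = Z by tauto_set] at hsplit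
  rw [rankOf_delete, rankOf_delete, hZS]
  omega

lemma IsSep.isMinor_delete (hS : M.IsSep S) (hNM : N ≤m M) (hNS : Disjoint N.E S) :
    N ≤m M ＼ S := by
  obtain ⟨C, D, -, -, hCD, rfl⟩ := hNM.exists_eq_contract_delete_disjoint
  have hSE := hS.1
  simp only [delete_ground, contract_ground] at hNS
  have hsplit : M ／ C ＼ D = M ／ (S ∩ C) ＼ (S \ (S ∩ C)) ／ (C \ S) ＼ (D \ S) := by
    rw [contract_delete_contract_delete _ _ _ _ _ (by tauto_set)]
    congr 2 <;> tauto_set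
  rw [hsplit, ← contract_delete_sdiff, hS.contract_delete_eq inter_subset_left]
  exact contract_delete_isMinor _ _ _

end Separator

section Connectivity

lemma IsConn.eq_empty_or_eq_ground (hM : M.IsConn) (hS : M.IsSep S) : S = ∅ ∨ S = M.E := by
  by_contra! h
  exact hM ⟨S, hS, h.1, h.2⟩

lemma isConn_dual_iff [M.Finite] : M✶.IsConn ↔ M.IsConn := by
  simp only [IsConn, dual_ground, isSep_dual_iff]

lemma IsConn.rankOf_ground_lt [M.RankFinite] (hM : M.IsConn) (hZ : Z ⊆ M.E) (hZne : Z.Nonempty)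
    (hZE : Z ≠ M.E) : M.rankOf M.E < M.rankOf Z + M.rankOf (M.E \ Z) := by
  have h := M.rankOf_union_le Z (M.E \ Z)
  rw [union_sdiff_cancel hZ] at h
  exact h.lt_of_ne fun h' => hM ⟨Z, ⟨hZ, h'.symm⟩, hZne, hZE⟩

/-- With `λ_M(Z) = r(Z) + r(E - Z) - r(E)`, this says
`λ_M(X ∩ A) + λ_M(E - e - (X ∪ A)) ≤ λ_{M ＼ e}(X) + λ_{M ／ e}(A) + 1`. -/
lemma IsSep.rankOf_cross_le [M.Finite] {A : Set α} (he : e ∈ M.E) (hX : (M ＼ {e}).IsSep X)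
    (hA : (M ／ {e}).IsSep A) :
    M.rankOf (X ∩ A) + M.rankOf (M.E \ (X ∩ A)) + M.rankOf (M.E \ insert e (X ∪ A)) +
      M.rankOf (insert e (X ∪ A)) ≤ 2 * M.rankOf M.E + 1 := by
  have hXE : X ⊆ M.E \ {e} := hX.1
  have hAE : A ⊆ M.E \ {e} := hA.1
  have heE : {e} ⊆ M.E := singleton_subset_iff.2 he
  have hdel := hX.2
  have hcon := hA.2
  simp only [delete_ground, contract_ground, rankOf_delete, sdiff_idem] at hdel hcon
  rw [show X \ {e} = X by tauto_set, show ((M.E \ {e}) \ X) \ {e} = (M.E \ {e}) \ X by tauto_set]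
    at hdel
  have c₁ := rankOf_contract_add heE hAE
  have c₂ := rankOf_contract_add heE (X := (M.E \ {e}) \ A) sdiff_subset
  have c₃ := rankOf_contract_add heE (X := M.E \ {e}) subset_rfl
  have s₁ := M.rankOf_inter_add_rankOf_union_le X (A ∪ {e})
  have s₂ := M.rankOf_inter_add_rankOf_union_le ((M.E \ {e}) \ X) ((M.E \ {e}) \ A ∪ {e})
  rw [sdiff_union_self, union_eq_left.2 heE] at c₃
  rw [insert_eq]
  rw [show X ∩ (A ∪ {e}) = X ∩ A by tauto_set,
    show X ∪ (A ∪ {e}) = {e} ∪ (X ∪ A) by tauto_set] at s₁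
  rw [show (M.E \ {e}) \ X ∩ ((M.E \ {e}) \ A ∪ {e}) = M.E \ ({e} ∪ (X ∪ A)) by tauto_set,
    show (M.E \ {e}) \ X ∪ ((M.E \ {e}) \ A ∪ {e}) = M.E \ (X ∩ A) by tauto_set] at s₂
  have hmono := M.rankOf_mono (sdiff_subset : M.E \ {e} ⊆ M.E)
  have hsing := M.rankOf_singleton_le e
  omega

lemma IsConn.inter_eq_empty_or_sdiff_eq_empty [M.Finite] {A : Set α} (hM : M.IsConn)
    (he : e ∈ M.E) (hX : (M ＼ {e}).IsSep X) (hA : (M ／ {e}).IsSep A) :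
    X ∩ A = ∅ ∨ M.E \ insert e (X ∪ A) = ∅ := by
  have hXE : X ⊆ M.E \ {e} := hX.1
  have heX : e ∉ X ∩ A := fun h => (hXE h.1).2 rfl
  by_contra! h
  have h₁ := hM.rankOf_ground_lt (inter_subset_left.trans (hXE.trans sdiff_subset)) h.1
    (fun h' => heX (h' ▸ he))
  have h₂ := hM.rankOf_ground_lt sdiff_subset h.2 (fun h' => (h' ▸ he).2 (mem_insert e _))
  rw [sdiff_sdiff_cancel_left (insert_subset he (union_subset (hXE.trans sdiff_subset)
    (hA.1.trans sdiff_subset)))] at h₂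
  have := hX.rankOf_cross_le he hA
  omega

lemma IsConn.isConn_contract_of_isSep_delete [M.Finite] (hM : M.IsConn) (he : e ∈ M.E)
    (hX : (M ＼ {e}).IsSep X) (hXne : X.Nonempty) (hXE : X ≠ M.E \ {e}) :
    (M ／ {e}).IsConn := by
  rintro ⟨A, hA, hAne, hAE⟩
  have hXE' : X ⊆ M.E \ {e} := hX.1
  have hAE' : A ⊆ M.E \ {e} := hA.1
  change A ≠ M.E \ {e} at hAE
  have h₁ := hM.inter_eq_empty_or_sdiff_eq_empty he hX hA
  have h₂ := hM.inter_eq_empty_or_sdiff_eq_empty he hX hA.compl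
  simp only [contract_ground, insert_eq] at h₁ h₂
  -- Each of the four ways to satisfy `h₁` and `h₂` empties `X`, `A` or a complement of one.
  rcases h₁ with h₁ | h₁
  · rcases h₂ with h₂ | h₂
    · exact hXne.ne_empty (by tauto_set)
    · exact hAne.ne_empty (by tauto_set)
  · rcases h₂ with h₂ | h₂
    · exact hAE (by clear hAE hXE; tauto_set)
    · exact hXE (by clear hAE hXE; tauto_set)

lemma IsConn.isSep_singleton_delete [M.RankFinite] (hM : M.IsConn) (he : e ∈ M.E)
    (hS : (M ＼ {e}).IsSep S) (hSne : S.Nonempty) : (M ＼ S).IsSep {e} := by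
  have hSE : S ⊆ M.E \ {e} := hS.1
  have heS : e ∉ S := fun h => (hSE h).2 rfl
  refine ⟨singleton_subset_iff.2 ⟨he, heS⟩, ?_⟩
  have hsep := hS.2
  simp only [delete_ground, rankOf_delete, sdiff_idem] at hsep ⊢
  rw [show S \ {e} = S by tauto_set,
    show ((M.E \ {e}) \ S) \ {e} = (M.E \ {e}) \ S by tauto_set] at hsep
  rw [sdiff_eq_left.2 (disjoint_singleton_left.2 heS),
    show ((M.E \ S) \ {e}) \ S = (M.E \ {e}) \ S by tauto_set]
  have hlt := hM.rankOf_ground_lt (hSE.trans sdiff_subset) hSne fun h => heS (h ▸ he)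
  have hsub := M.rankOf_union_le ((M.E \ {e}) \ S) {e}
  have heE : {e} ⊆ M.E := singleton_subset_iff.2 he
  rw [show (M.E \ {e}) \ S ∪ {e} = M.E \ S by tauto_set] at hsub
  have hmono := M.rankOf_mono (sdiff_subset : M.E \ {e} ⊆ M.E)
  have hsing := M.rankOf_singleton_le e
  omega

end Connectivity

section Minor

lemma IsMinor.dual (h : N ≤m M) : N✶ ≤m M✶ := by
  obtain ⟨C, D, rfl⟩ := h
  rw [dual_contract_delete, delete_contract_comm']
  exact contract_delete_isMinor _ _ _

lemma delete_isMinor (M : Matroid α) (D : Set α) : M ＼ D ≤m M :=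
  ⟨∅, D, by rw [contract_empty]⟩

lemma contract_isMinor (M : Matroid α) (C : Set α) : M ／ C ≤m M :=
  ⟨C, ∅, by rw [delete_empty]⟩

lemma IsMinor.isMinor_delete_or_isMinor_contract (h : N ≤m M) (heM : e ∈ M.E)
    (heN : e ∉ N.E) : N ≤m M ＼ {e} ∨ N ≤m M ／ {e} := by
  obtain ⟨C, D, -, -, hCD, rfl⟩ := h.exists_eq_contract_delete_disjoint
  by_cases heC : e ∈ C
  · right
    rw [← insert_eq_of_mem heC, insert_eq, ← contract_contract]
    exact contract_delete_isMinor _ _ _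
  · left
    have heD : e ∈ D := by simp only [delete_ground, contract_ground, mem_sdiff] at heN; tauto
    rw [← insert_eq_of_mem heD, insert_eq, ← delete_delete,
      contract_delete_comm _ (disjoint_singleton_right.2 heC)]
    exact contract_delete_isMinor _ _ _

lemma IsConn.exists_isSep_disjoint_of_isMinor [M.Finite] (hN : N.IsConn) (hNM : N ≤m M)
    (hX : M.IsSep X) (hXne : X.Nonempty) (hXE : X ≠ M.E) :
    ∃ S, M.IsSep S ∧ S.Nonempty ∧ S ≠ M.E ∧ Disjoint N.E S := by
  rcases hN.eq_empty_or_eq_ground (hX.inter_ground_of_isMinor hNM) with h | h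
  · exact ⟨X, hX, hXne, hXE, by rw [disjoint_iff_inter_eq_empty, inter_comm, h]⟩
  refine ⟨_, hX.compl, sdiff_nonempty.2 fun h' => hXE (subset_antisymm hX.1 h'), ?_,
    disjoint_sdiff_right.mono_left (inter_eq_right.1 h)⟩
  obtain ⟨x, hx⟩ := hXne
  exact fun h' => (h'.symm ▸ hX.1 hx : x ∈ M.E \ X).2 hx

lemma IsConn.splitter_of_isMinor_delete [M.Finite] (hM : M.IsConn) (hN : N.IsConn)
    (he : e ∈ M.E) (hNM : N ≤m M ＼ {e}) :
    (M ＼ {e}).IsConn ∨ ((M ／ {e}).IsConn ∧ N ≤m M ／ {e}) := by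
  refine or_iff_not_imp_left.2 fun hdel => ?_
  obtain ⟨X, hX, hXne, hXE⟩ := not_not.1 hdel
  obtain ⟨S, hS, hSne, hSE, hNS⟩ := hN.exists_isSep_disjoint_of_isMinor hNM hX hXne hXE
  refine ⟨hM.isConn_contract_of_isSep_delete he hS hSne hSE, ?_⟩
  -- `e` is a coloop of `M ＼ S`, so contracting it there is the same as deleting it.
  have hS' : (M ＼ S).IsSep {e} := hM.isSep_singleton_delete he hS hSne
  have heS : Disjoint {e} S := disjoint_singleton_left.2 fun h => (hS.1 h).2 rfl
  refine (hS.isMinor_delete hNM hNS).trans ?_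
  rw [delete_comm, ← hS'.contract_delete_eq subset_rfl, delete_contract_delete _ _ _ _ heS]
  exact delete_isMinor _ _

end Minor

section MinorOfElem

lemma delElem_eq_delete (M : Matroid α) (e : α) : M.delElem e = M ＼ {e} := rfl

lemma conElem_eq_contract (M : Matroid α) (e : α) : M.conElem e = M ／ {e} := rfl

lemma MinorOfElem.trans {K : Matroid α} (h₁ : N.MinorOfElem K) (h₂ : K.MinorOfElem M) :
    N.MinorOfElem M := by
  induction h₁ with
  | refl => exact h₂
  | del f _ hf ih => exact .del f (ih h₂) hf
  | con f _ hf ih => exact .con f (ih h₂) hf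

lemma MinorOfElem.isMinor (h : N.MinorOfElem M) : N ≤m M := by
  induction h with
  | refl => exact IsMinor.refl
  | del f _ _ ih => exact (delete_isMinor _ _).trans ih
  | con f _ _ ih => exact (contract_isMinor _ _).trans ih

lemma minorOfElem_delete (hD : D.Finite) (hDE : D ⊆ M.E) : (M ＼ D).MinorOfElem M := by
  induction D, hD using Set.Finite.induction_on with
  | empty => rw [delete_empty]; exact .refl M
  | @insert a D haD _ ih =>
    rw [insert_eq, union_comm, ← delete_delete]
    exact .del a (ih ((subset_insert a D).trans hDE)) ⟨hDE (mem_insert a D), haD⟩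

lemma minorOfElem_contract (hC : C.Finite) (hCE : C ⊆ M.E) : (M ／ C).MinorOfElem M := by
  induction C, hC using Set.Finite.induction_on with
  | empty => rw [contract_empty]; exact .refl M
  | @insert a C haC _ ih =>
    rw [insert_eq, union_comm, ← contract_contract]
    exact .con a (ih ((subset_insert a C).trans hCE)) ⟨hCE (mem_insert a C), haC⟩

lemma IsMinor.minorOfElem [M.Finite] (h : N ≤m M) : N.MinorOfElem M := by
  obtain ⟨C, D, hC, hD, hCD, rfl⟩ := h.exists_eq_contract_delete_disjoint
  exact (minorOfElem_delete (M.ground_finite.subset hD) (subset_sdiff.2 ⟨hD, hCD.symm⟩)).trans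
    (minorOfElem_contract (M.ground_finite.subset hC) hC)

end MinorOfElem

end Matroid

open Matroid in
/-- **The Brylawski–Seymour splitter theorem.** Let `N` be a connected minor of a
connected finite matroid `M` and let `e ∈ E(M) − E(N)`. Then `M∖e` or `M/e` is connected
and has `N` as a minor. -/
theorem matroid_splitter {α : Type*} (M N : Matroid α) (hfin : M.E.Finite)
    (hconn : M.IsConn) (hminor : N.MinorOfElem M) (hconnN : N.IsConn)
    (e : α) (heM : e ∈ M.E) (heN : e ∉ N.E) :
    ((M.delElem e).IsConn ∧ N.MinorOfElem (M.delElem e)) ∨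
      ((M.conElem e).IsConn ∧ N.MinorOfElem (M.conElem e)) := by
  have : M.Finite := ⟨hfin⟩
  rw [delElem_eq_delete, conElem_eq_contract]
  refine Or.imp (And.imp_right IsMinor.minorOfElem) (And.imp_right IsMinor.minorOfElem) ?_
  rcases hminor.isMinor.isMinor_delete_or_isMinor_contract heM heN with h | h
  · exact (hconn.splitter_of_isMinor_delete hconnN heM h).imp (⟨·, h⟩) id
  have : N.Finite := ⟨hfin.subset (h.trans (contract_isMinor M {e})).subset⟩
  rcases (isConn_dual_iff.2 hconn).splitter_of_isMinor_delete (isConn_dual_iff.2 hconnN) heM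
    (by rw [← dual_contract]; exact h.dual) with hc | ⟨hc, hm⟩
  · exact Or.inr ⟨isConn_dual_iff.1 (by rwa [dual_contract]), h⟩
  · exact Or.inl ⟨isConn_dual_iff.1 (by rwa [dual_delete]), by simpa using hm.dual⟩
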